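/- Let n ≥ 1, 0 < m ≤ 1, let σ : ℝ → ℝ be differentiable with m ≤ σ'(s) ≤ 1 for all s ∈ ℝ, let A₁, A₂ be real n×n matrices and b₁, b₂ ∈ ℝⁿ, and define f(x) = σ(A₂ σ(A₁ x + b₁) + b₂). Set δ⋆ = sup_{D₁, D₂ ∈ Ω_m} μ₂(D₂ A₂ D₁ A₁). Then for all x, y ∈ ℝⁿ, ⟨f(x) − f(y), x − y⟩ ≤ δ⋆ ‖x − y‖², i.e. the two-layer vector field satisfies the one-sided Lipschitz condition with constant δ⋆. -/

import Mathlib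

open Matrix
open scoped RealInnerProductSpace

noncomputable section

/-- The symmetric part Sym(M) = (M + Mᵀ)/2 of a square real matrix. -/
def symPart {n : ℕ} (M : Matrix (Fin n) (Fin n) ℝ) : Matrix (Fin n) (Fin n) ℝ :=
  (1/2 : ℝ) • (M + Mᵀ)

theorem symPart_isHermitian {n : ℕ} (M : Matrix (Fin n) (Fin n) ℝ) :
    (symPart M).IsHermitian := by
  unfold symPart Matrix.IsHermitian
  ext i j
  simp [Matrix.conjTranspose_apply, Matrix.transpose_apply, Matrix.add_apply]
  ring

/-- The logarithmic 2-norm μ₂(M): the largest eigenvalue of the symmetric part of M. -/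
def mu2 {n : ℕ} (M : Matrix (Fin n) (Fin n) ℝ) : ℝ :=
  ⨆ i, (symPart_isHermitian M).eigenvalues i

/-- `OmegaSet n m` is the set Ω_m of real n×n diagonal matrices whose diagonal
entries all lie in the interval [m, 1]. -/
def OmegaSet (n : ℕ) (m : ℝ) : Set (Matrix (Fin n) (Fin n) ℝ) :=
  {D | D.IsDiag ∧ ∀ i, m ≤ D i i ∧ D i i ≤ 1}

/-- Identification of `Fin n → ℝ` with the Euclidean space ℝⁿ. -/
def toE {n : ℕ} (v : Fin n → ℝ) : EuclideanSpace ℝ (Fin n) :=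
  (WithLp.equiv 2 _).symm v

/-- Matrix-vector multiplication on Euclidean space. -/
def mulVecE {p q : ℕ} (A : Matrix (Fin p) (Fin q) ℝ) (x : EuclideanSpace ℝ (Fin q)) :
    EuclideanSpace ℝ (Fin p) := toE (A.mulVec (WithLp.equiv 2 _ x))

/-- Entrywise application of a scalar function σ to a vector of Euclidean space. -/
def mapE {n : ℕ} (σ : ℝ → ℝ) (x : EuclideanSpace ℝ (Fin n)) : EuclideanSpace ℝ (Fin n) :=
  toE (fun i => σ (WithLp.equiv 2 _ x i))

/- ---------- auxiliary lemmas ---------- -/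

lemma slope_bound (m : ℝ) (hm1 : m ≤ 1) (σ : ℝ → ℝ) (hσ : Differentiable ℝ σ)
    (hσ' : ∀ s, m ≤ deriv σ s ∧ deriv σ s ≤ 1) (a b : ℝ) :
    ∃ d, m ≤ d ∧ d ≤ 1 ∧ σ a - σ b = d * (a - b) := by
  rcases lt_trichotomy a b with h | h | h
  · obtain ⟨c, -, hc⟩ := exists_deriv_eq_slope σ h hσ.continuous.continuousOn
      (fun x _ => (hσ x).differentiableWithinAt)
    refine ⟨deriv σ c, (hσ' c).1, (hσ' c).2, ?_⟩
    rw [hc, div_mul_eq_mul_div, eq_div_iff (by linarith : b - a ≠ 0)]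
    ring
  · exact ⟨m, le_refl m, hm1, by rw [h]; ring⟩
  · obtain ⟨c, -, hc⟩ := exists_deriv_eq_slope σ h hσ.continuous.continuousOn
      (fun x _ => (hσ x).differentiableWithinAt)
    refine ⟨deriv σ c, (hσ' c).1, (hσ' c).2, ?_⟩
    rw [hc, div_mul_eq_mul_div, eq_div_iff (by linarith : a - b ≠ 0)]
    try ring

lemma mulVecE_eq_toEuclideanLin {n : ℕ} (A : Matrix (Fin n) (Fin n) ℝ)
    (x : EuclideanSpace ℝ (Fin n)) : mulVecE A x = Matrix.toEuclideanLin A x := rfl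

lemma mulVecE_sub {n : ℕ} (A : Matrix (Fin n) (Fin n) ℝ) (x y : EuclideanSpace ℝ (Fin n)) :
    mulVecE A x - mulVecE A y = mulVecE A (x - y) := by
  simp only [mulVecE_eq_toEuclideanLin, map_sub]

lemma mulVecE_mulVecE {n : ℕ} (A B : Matrix (Fin n) (Fin n) ℝ) (x : EuclideanSpace ℝ (Fin n)) :
    mulVecE A (mulVecE B x) = mulVecE (A * B) x := by
  ext i
  simp [mulVecE, toE, Matrix.mulVec_mulVec]

lemma mulVecE_eigen {n : ℕ} {S : Matrix (Fin n) (Fin n) ℝ} (hS : S.IsHermitian) (i : Fin n) :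
    mulVecE S (hS.eigenvectorBasis i) =
      hS.eigenvalues i • hS.eigenvectorBasis i := by
  have h := hS.mulVec_eigenvectorBasis i
  ext j
  have := congrFun h j
  simpa [mulVecE, toE] using this

lemma repr_mulVecE {n : ℕ} {S : Matrix (Fin n) (Fin n) ℝ} (hS : S.IsHermitian)
    (w : EuclideanSpace ℝ (Fin n)) (i : Fin n) :
    hS.eigenvectorBasis.repr (mulVecE S w) i =
      hS.eigenvalues i * hS.eigenvectorBasis.repr w i := by
  rw [OrthonormalBasis.repr_apply_apply, OrthonormalBasis.repr_apply_apply,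
    mulVecE_eq_toEuclideanLin,
    ← (Matrix.isHermitian_iff_isSymmetric.1 hS) (hS.eigenvectorBasis i) w,
    ← mulVecE_eq_toEuclideanLin, mulVecE_eigen hS i, real_inner_smul_left]

lemma inner_mulVecE_expand {n : ℕ} {S : Matrix (Fin n) (Fin n) ℝ} (hS : S.IsHermitian)
    (w : EuclideanSpace ℝ (Fin n)) :
    ⟪mulVecE S w, w⟫ = ∑ i, hS.eigenvalues i * (hS.eigenvectorBasis.repr w i) ^ 2 := by
  rw [← LinearIsometryEquiv.inner_map_map hS.eigenvectorBasis.repr, PiLp.inner_apply]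
  refine Finset.sum_congr rfl fun i _ => ?_
  rw [repr_mulVecE hS w i]
  simp [RCLike.inner_apply]
  ring

lemma norm_sq_expand {n : ℕ} {S : Matrix (Fin n) (Fin n) ℝ} (hS : S.IsHermitian)
    (w : EuclideanSpace ℝ (Fin n)) :
    ‖w‖ ^ 2 = ∑ i, (hS.eigenvectorBasis.repr w i) ^ 2 := by
  rw [← real_inner_self_eq_norm_sq,
    ← LinearIsometryEquiv.inner_map_map hS.eigenvectorBasis.repr, PiLp.inner_apply]
  refine Finset.sum_congr rfl fun i _ => ?_
  simp [RCLike.inner_apply]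

lemma quad_le {n : ℕ} [Nonempty (Fin n)] {S : Matrix (Fin n) (Fin n) ℝ} (hS : S.IsHermitian)
    (w : EuclideanSpace ℝ (Fin n)) :
    ⟪mulVecE S w, w⟫ ≤ (⨆ i, hS.eigenvalues i) * ‖w‖ ^ 2 := by
  rw [inner_mulVecE_expand hS, norm_sq_expand hS, Finset.mul_sum]
  refine Finset.sum_le_sum fun i _ => ?_
  exact mul_le_mul_of_nonneg_right
    (le_ciSup (Set.Finite.bddAbove (Set.finite_range _)) i) (sq_nonneg _)

lemma inner_mulVecE_sum {n : ℕ} (A : Matrix (Fin n) (Fin n) ℝ) (z : EuclideanSpace ℝ (Fin n)) :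
    ⟪mulVecE A z, z⟫ =
      ∑ j, ∑ k, A j k * (WithLp.equiv 2 _ z) k * (WithLp.equiv 2 _ z) j := by
  rw [PiLp.inner_apply]
  refine Finset.sum_congr rfl fun j _ => ?_
  simp [mulVecE, toE, Matrix.mulVec, dotProduct, RCLike.inner_apply, Finset.sum_mul]
  rw [Finset.mul_sum]; exact Finset.sum_congr rfl fun k _ => by ring

lemma inner_symPart {n : ℕ} (M : Matrix (Fin n) (Fin n) ℝ) (z : EuclideanSpace ℝ (Fin n)) :
    ⟪mulVecE M z, z⟫ = ⟪mulVecE (symPart M) z, z⟫ := by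
  rw [inner_mulVecE_sum, inner_mulVecE_sum]
  set z' := WithLp.equiv 2 _ z with hz'
  have h2 : ∀ j k, symPart M j k = 1/2 * (M j k + M k j) := by
    intro j k
    simp [symPart, Matrix.smul_apply, Matrix.add_apply, Matrix.transpose_apply]
  have key : ∑ j, ∑ k, M k j * z' k * z' j = ∑ j, ∑ k, M j k * z' k * z' j := by
    rw [Finset.sum_comm]
    exact Finset.sum_congr rfl fun j _ => Finset.sum_congr rfl fun k _ => by ring
  calc ∑ j, ∑ k, M j k * z' k * z' j
      = 1/2 * (∑ j, ∑ k, M j k * z' k * z' j) + 1/2 * (∑ j, ∑ k, M k j * z' k * z' j) := by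
        rw [key]; ring
    _ = ∑ j, ∑ k, (1/2 * (M j k * z' k * z' j) + 1/2 * (M k j * z' k * z' j)) := by
        simp [Finset.sum_add_distrib, Finset.mul_sum]
    _ = ∑ j, ∑ k, symPart M j k * z' k * z' j := by
        refine Finset.sum_congr rfl fun j _ => Finset.sum_congr rfl fun k _ => ?_
        rw [h2]; ring

lemma coord_abs_le_one {n : ℕ} (v : EuclideanSpace ℝ (Fin n)) (hv : ‖v‖ = 1) (j : Fin n) :
    |v j| ≤ 1 := by
  have h2 : ∑ k, (v k) ^ 2 = 1 := by
    have h := hv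
    rw [EuclideanSpace.norm_eq] at h
    have hnn : (0:ℝ) ≤ ∑ k, ‖v k‖ ^ 2 := Finset.sum_nonneg fun _ _ => sq_nonneg _
    have h4 : ∑ k, ‖v k‖ ^ 2 = 1 := by
      have h5 := Real.sq_sqrt hnn
      rw [h] at h5
      linarith
    calc ∑ k, (v k) ^ 2 = ∑ k, ‖v k‖ ^ 2 := by
          refine Finset.sum_congr rfl fun k _ => ?_
          rw [Real.norm_eq_abs, sq_abs]
      _ = 1 := h4
  have h1 : (v j) ^ 2 ≤ 1 := h2 ▸ Finset.single_le_sum (fun k _ => sq_nonneg (v k))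
    (Finset.mem_univ j)
  nlinarith [abs_nonneg (v j), sq_abs (v j)]

lemma eigenvalue_le {n : ℕ} {S : Matrix (Fin n) (Fin n) ℝ} (hS : S.IsHermitian) (i : Fin n) :
    hS.eigenvalues i ≤ ∑ j, ∑ k, |S j k| := by
  set v := hS.eigenvectorBasis i with hv
  have hnv : ‖v‖ = 1 := hS.eigenvectorBasis.orthonormal.1 i
  have key : hS.eigenvalues i = ⟪mulVecE S v, v⟫ := by
    rw [mulVecE_eigen hS i, real_inner_smul_left, ← hv, real_inner_self_eq_norm_sq, hnv]
    ring
  rw [key, inner_mulVecE_sum]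
  refine Finset.sum_le_sum fun j _ => Finset.sum_le_sum fun k _ => ?_
  have hk := coord_abs_le_one v hnv k
  have hj := coord_abs_le_one v hnv j
  calc S j k * v k * v j ≤ |S j k * v k * v j| := le_abs_self _
    _ = |S j k| * |v k| * |v j| := by rw [abs_mul, abs_mul]
    _ ≤ |S j k| * 1 * 1 := by
        gcongr
    _ = |S j k| := by ring

lemma mu2_le_sum_abs {n : ℕ} [Nonempty (Fin n)] (M : Matrix (Fin n) (Fin n) ℝ) :
    mu2 M ≤ ∑ j, ∑ k, |M j k| := by
  refine ciSup_le fun i => (eigenvalue_le (symPart_isHermitian M) i).trans ?_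
  have key : ∑ j, ∑ k, |M k j| = ∑ j, ∑ k, |M j k| := Finset.sum_comm
  calc ∑ j, ∑ k, |symPart M j k|
      ≤ ∑ j, ∑ k, (1/2 * |M j k| + 1/2 * |M k j|) := by
        refine Finset.sum_le_sum fun j _ => Finset.sum_le_sum fun k _ => ?_
        have : symPart M j k = 1/2 * (M j k + M k j) := by
          simp [symPart, Matrix.smul_apply, Matrix.add_apply, Matrix.transpose_apply]
        rw [this]
        calc |1/2 * (M j k + M k j)| = 1/2 * |M j k + M k j| := by
              rw [abs_mul]; norm_num
          _ ≤ 1/2 * (|M j k| + |M k j|) := by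
              have := abs_add_le (M j k) (M k j)
              linarith
          _ = 1/2 * |M j k| + 1/2 * |M k j| := by ring
    _ = ∑ j, ∑ k, |M j k| := by
        simp only [Finset.sum_add_distrib, ← Finset.mul_sum]
        rw [key]; ring

lemma mapE_sub_eq {n : ℕ} (m : ℝ) (hm1 : m ≤ 1) (σ : ℝ → ℝ) (hσ : Differentiable ℝ σ)
    (hσ' : ∀ s, m ≤ deriv σ s ∧ deriv σ s ≤ 1) (u v : EuclideanSpace ℝ (Fin n)) :
    ∃ d : Fin n → ℝ, (∀ i, m ≤ d i ∧ d i ≤ 1) ∧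
      mapE σ u - mapE σ v = mulVecE (Matrix.diagonal d) (u - v) := by
  choose d h1 h2 h3 using fun i =>
    slope_bound m hm1 σ hσ hσ' (WithLp.equiv 2 _ u i) (WithLp.equiv 2 _ v i)
  refine ⟨d, fun i => ⟨h1 i, h2 i⟩, ?_⟩
  ext i
  simp only [PiLp.sub_apply, mapE, mulVecE, toE, WithLp.equiv_symm_apply,
    Matrix.mulVec_diagonal, WithLp.equiv_apply]
  exact h3 i

lemma diagonal_mem_Omega {n : ℕ} {m : ℝ} {d : Fin n → ℝ} (hd : ∀ i, m ≤ d i ∧ d i ≤ 1) :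
    Matrix.diagonal d ∈ OmegaSet n m := by
  refine ⟨Matrix.isDiag_diagonal d, fun i => ?_⟩
  simpa [Matrix.diagonal_apply_eq] using hd i

lemma omega_entry_bound {n : ℕ} {m : ℝ} (hm0 : 0 < m) {D₁ D₂ : Matrix (Fin n) (Fin n) ℝ}
    (hD₁ : D₁ ∈ OmegaSet n m) (hD₂ : D₂ ∈ OmegaSet n m)
    (A₁ A₂ : Matrix (Fin n) (Fin n) ℝ) (j k : Fin n) :
    |(D₂ * A₂ * D₁ * A₁) j k| ≤ ∑ l, |A₂ j l| * |A₁ l k| := by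
  have e₁ : Matrix.diagonal D₁.diag = D₁ := hD₁.1.diagonal_diag
  have e₂ : Matrix.diagonal D₂.diag = D₂ := hD₂.1.diagonal_diag
  have habs : ∀ (D : Matrix (Fin n) (Fin n) ℝ), D ∈ OmegaSet n m → ∀ i, |D i i| ≤ 1 := by
    intro D hD i
    have := hD.2 i
    rw [abs_le]
    constructor <;> linarith
  have hentry : (D₂ * A₂ * D₁ * A₁) j k = ∑ l, (D₂ j j * A₂ j l) * (D₁ l l * A₁ l k) := by
    rw [mul_assoc (D₂ * A₂) D₁ A₁, Matrix.mul_apply]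
    refine Finset.sum_congr rfl fun l _ => ?_
    rw [← e₁, ← e₂, Matrix.diagonal_mul, Matrix.diagonal_mul]
    simp [Matrix.diag]
  rw [hentry]
  calc |∑ l, (D₂ j j * A₂ j l) * (D₁ l l * A₁ l k)|
      ≤ ∑ l, |(D₂ j j * A₂ j l) * (D₁ l l * A₁ l k)| := Finset.abs_sum_le_sum_abs _ _
    _ ≤ ∑ l, |A₂ j l| * |A₁ l k| := by
        refine Finset.sum_le_sum fun l _ => ?_
        rw [abs_mul, abs_mul, abs_mul]
        have h2 := habs D₂ hD₂ j
        have h1 := habs D₁ hD₁ l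
        calc |D₂ j j| * |A₂ j l| * (|D₁ l l| * |A₁ l k|)
            ≤ 1 * |A₂ j l| * (1 * |A₁ l k|) := by
              gcongr
          _ = |A₂ j l| * |A₁ l k| := by ring

/-- The two-layer vector field f(x) = σ(A₂ σ(A₁ x + b₁) + b₂) satisfies the
one-sided Lipschitz condition with constant δ⋆ = sup_{D₁,D₂ ∈ Ω_m} μ₂(D₂ A₂ D₁ A₁). -/
theorem one_sided_lipschitz_two_layer
    {n : ℕ} (hn : 1 ≤ n) (m : ℝ) (hm0 : 0 < m) (hm1 : m ≤ 1)
    (σ : ℝ → ℝ) (hσ : Differentiable ℝ σ)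
    (hσ' : ∀ s : ℝ, m ≤ deriv σ s ∧ deriv σ s ≤ 1)
    (A₁ A₂ : Matrix (Fin n) (Fin n) ℝ) (b₁ b₂ : EuclideanSpace ℝ (Fin n)) :
    ∀ x y : EuclideanSpace ℝ (Fin n),
      ⟪mapE σ (mulVecE A₂ (mapE σ (mulVecE A₁ x + b₁)) + b₂)
          - mapE σ (mulVecE A₂ (mapE σ (mulVecE A₁ y + b₁)) + b₂), x - y⟫
        ≤ sSup {r : ℝ | ∃ D₁ ∈ OmegaSet n m, ∃ D₂ ∈ OmegaSet n m,
            r = mu2 (D₂ * A₂ * D₁ * A₁)} * ‖x - y‖ ^ 2 := by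
  haveI : Nonempty (Fin n) := ⟨⟨0, hn⟩⟩
  intro x y
  set Sset := {r : ℝ | ∃ D₁ ∈ OmegaSet n m, ∃ D₂ ∈ OmegaSet n m,
      r = mu2 (D₂ * A₂ * D₁ * A₁)} with hSset
  -- boundedness of the sup set
  have hbdd : BddAbove Sset := by
    refine ⟨∑ j, ∑ k, ∑ l, |A₂ j l| * |A₁ l k|, fun r hr => ?_⟩
    obtain ⟨D₁, hD₁, D₂, hD₂, rfl⟩ := hr
    refine (mu2_le_sum_abs _).trans ?_
    exact Finset.sum_le_sum fun j _ => Finset.sum_le_sum fun k _ =>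
      omega_entry_bound hm0 hD₁ hD₂ A₁ A₂ j k
  -- the MVT diagonal matrices
  obtain ⟨d₁, hd₁, hlayer₁⟩ := mapE_sub_eq m hm1 σ hσ hσ' (mulVecE A₁ x + b₁) (mulVecE A₁ y + b₁)
  obtain ⟨d₂, hd₂, hlayer₂⟩ := mapE_sub_eq m hm1 σ hσ hσ'
    (mulVecE A₂ (mapE σ (mulVecE A₁ x + b₁)) + b₂)
    (mulVecE A₂ (mapE σ (mulVecE A₁ y + b₁)) + b₂)
  set D₁ := Matrix.diagonal d₁
  set D₂ := Matrix.diagonal d₂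
  set M := D₂ * A₂ * D₁ * A₁ with hM
  have hdiff : mapE σ (mulVecE A₂ (mapE σ (mulVecE A₁ x + b₁)) + b₂)
      - mapE σ (mulVecE A₂ (mapE σ (mulVecE A₁ y + b₁)) + b₂) = mulVecE M (x - y) := by
    rw [hlayer₂, add_sub_add_right_eq_sub, mulVecE_sub, hlayer₁, add_sub_add_right_eq_sub,
      mulVecE_sub, mulVecE_mulVecE, mulVecE_mulVecE, mulVecE_mulVecE]
  rw [hdiff]
  have hmem : mu2 M ∈ Sset := ⟨D₁, diagonal_mem_Omega hd₁, D₂, diagonal_mem_Omega hd₂, rfl⟩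
  calc ⟪mulVecE M (x - y), x - y⟫
      = ⟪mulVecE (symPart M) (x - y), x - y⟫ := inner_symPart M (x - y)
    _ ≤ mu2 M * ‖x - y‖ ^ 2 := quad_le (symPart_isHermitian M) (x - y)
    _ ≤ sSup Sset * ‖x - y‖ ^ 2 :=
        mul_le_mul_of_nonneg_right (le_csSup hbdd hmem) (sq_nonneg _)
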